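/- arXiv:1803.06243 — 2 statements merged into one kernel-verified Lean document; each statement's English description precedes it below -/
import Mathlib

section
/- Let f : X → ℝ be locally Lipschitz continuous and let A_k, A ⊂ X be nonempty with A compact and A_k → A in the Hausdorff metric. If a_k ∈ ∂f(A_k) and a_k converges to a in the weak* topology of X*, then a ∈ ∂f(A). -/
open Filter Metric Set NormedSpace
open scoped NNReal

variable {X : Type*} [NormedAddCommGroup X] [NormedSpace ℝ X]

/-- Clarke's generalized directional derivative
`f⁰(x;h) = limsup_{y→x, t↓0⁺} (f(y+th) − f(y))/t`. -/
noncomputable def clarkeDeriv (f : X → ℝ) (x : X) (h : X) : ℝ :=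
  Filter.limsup (fun p : X × ℝ => (f (p.1 + p.2 • h) - f p.1) / p.2)
    ((nhds x) ×ˢ (nhdsWithin 0 (Set.Ioi 0)))

/-- Clarke's generalized gradient `∂f(x) = {a ∈ X* : ⟨a,h⟩ ≤ f⁰(x;h) ∀ h}`. -/
def clarkeGrad (f : X → ℝ) (x : X) : Set (StrongDual ℝ X) :=
  {a | ∀ h : X, a h ≤ clarkeDeriv f x h}

/-- Directional derivative of `f` on the set `A`: `f⁰(A;h) = sup_{y∈A} f⁰(y;h)`. -/
noncomputable def setDeriv (f : X → ℝ) (A : Set X) (h : X) : ℝ :=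
  sSup ((fun y => clarkeDeriv f y h) '' A)

/-- Gradient of `f` on the set `A`: the weak*-closed convex hull of `⋃_{y∈A} ∂f(y)`. -/
def setGrad (f : X → ℝ) (A : Set X) : Set (StrongDual ℝ X) :=
  {a | StrongDual.toWeakDual a ∈
    closure ((StrongDual.toWeakDual (𝕜 := ℝ) (E := X)) '' (convexHull ℝ (⋃ y ∈ A, clarkeGrad f y)))}


open scoped Topology

/-! If `a₀ ∉ ∂f(A₀)`, Hahn–Banach in `X*` with its (locally convex) weak* topology separates `a₀`
from the weak*-closed convex set `∂f(A₀)` by a weak*-continuous functional, i.e. by evaluation at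
some `h : X`: `⟨b, h⟩ < u < ⟨a₀, h⟩` for all `b ∈ ∂f(A₀)`. Since `f⁰(y; ·)` is sublinear and
dominated by `K‖·‖`, Hahn–Banach again gives `b ∈ ∂f(y)` with `⟨b, h⟩ = f⁰(y; h)`, so `f⁰(·; h) < u`
on `A₀`. This function is upper semicontinuous and `A₀` is compact, so `f⁰(·; h) < u` on a whole
`ρ`-neighbourhood of `A₀`, which contains `A k` for large `k`. Then `⟨a k, h⟩ ≤ u`, contradicting
`⟨a k, h⟩ → ⟨a₀, h⟩`. -/

noncomputable def diffQuot (f : X → ℝ) (h : X) (p : X × ℝ) : ℝ :=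
  (f (p.1 + p.2 • h) - f p.1) / p.2

theorem clarkeDeriv_eq_limsup_diffQuot (f : X → ℝ) (x h : X) :
    clarkeDeriv f x h = limsup (diffQuot f h) (𝓝 x ×ˢ 𝓝[>] 0) := rfl

theorem diffQuot_add (f : X → ℝ) (h k : X) (p : X × ℝ) :
    diffQuot f (h + k) p = diffQuot f h (p.1 + p.2 • k, p.2) + diffQuot f k p := by
  simp only [diffQuot]
  rw [← add_div, sub_add_sub_cancel, smul_add, ← add_assoc, add_right_comm]

-- also at `p.2 = 0`, where both sides are `0` because `x / 0 = 0`
theorem diffQuot_smul (f : X → ℝ) {c : ℝ} (hc : c ≠ 0) (h : X) (p : X × ℝ) :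
    diffQuot f (c • h) p = c * diffQuot f h (p.1, c * p.2) := by
  simp only [diffQuot, smul_smul, mul_comm p.2 c, mul_div_assoc']
  exact (mul_div_mul_left _ _ hc).symm

theorem tendsto_translate_nhds_prod_nhdsGT (x k : X) :
    Tendsto (fun p : X × ℝ => (p.1 + p.2 • k, p.2)) (𝓝 x ×ˢ 𝓝[>] 0) (𝓝 x ×ˢ 𝓝[>] 0) := by
  refine Tendsto.prodMk ?_ tendsto_snd
  simpa using (tendsto_fst (g := 𝓝[>] (0 : ℝ))).add
    ((tendsto_snd (f := 𝓝 x)).mono_right nhdsWithin_le_nhds |>.smul_const k)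

theorem map_mul_left_nhdsGT_zero {𝕜 : Type*} [Field 𝕜] [LinearOrder 𝕜] [IsStrictOrderedRing 𝕜]
    [TopologicalSpace 𝕜] [OrderTopology 𝕜] {c : 𝕜} (hc : 0 < c) :
    map (c * ·) (𝓝[>] (0 : 𝕜)) = 𝓝[>] 0 := by
  have := map_comap_of_surjective (mul_left_surjective₀ hc.ne') (𝓝[>] (0 : 𝕜))
  rwa [comap_mulLeft_nhdsGT_zero hc] at this

theorem map_rescale_prod_nhdsGT {α : Type*} (F : Filter α) {c : ℝ} (hc : 0 < c) :
    map (fun p : α × ℝ => (p.1, c * p.2)) (F ×ˢ 𝓝[>] 0) = F ×ˢ 𝓝[>] 0 := by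
  change map (Prod.map id (c * ·)) _ = _
  rw [← prod_map_map_eq', map_id, map_mul_left_nhdsGT_zero hc]

section LocallyLipschitz

variable {f : X → ℝ}

theorem LocallyLipschitz.exists_eventually_abs_diffQuot_le (hf : LocallyLipschitz f)
    (x : X) : ∃ K : ℝ, ∀ h, ∀ᶠ p in 𝓝 x ×ˢ 𝓝[>] 0, |diffQuot f h p| ≤ K * ‖h‖ := by
  obtain ⟨K, t, ht, hK⟩ := hf x
  refine ⟨K, fun h => ?_⟩
  have hshift : Tendsto (fun p : X × ℝ => p.1 + p.2 • h) (𝓝 x ×ˢ 𝓝[>] 0) (𝓝 x) :=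
    tendsto_fst.comp (tendsto_translate_nhds_prod_nhdsGT x h)
  filter_upwards [tendsto_fst.eventually ht, hshift.eventually ht,
    tendsto_snd.eventually self_mem_nhdsWithin] with p hp hph (hpos : 0 < p.2)
  have hdist : dist (p.1 + p.2 • h) p.1 = p.2 * ‖h‖ := by
    rw [dist_eq_norm, add_sub_cancel_left, norm_smul, Real.norm_of_nonneg hpos.le]
  rw [diffQuot, abs_div, abs_of_pos hpos, div_le_iff₀ hpos, ← Real.dist_eq]
  calc dist (f (p.1 + p.2 • h)) (f p.1) ≤ K * dist (p.1 + p.2 • h) p.1 := hK.dist_le_mul _ hph _ hp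
    _ = K * ‖h‖ * p.2 := by rw [hdist]; ring

theorem LocallyLipschitz.isBoundedUnder_diffQuot_comp (hf : LocallyLipschitz f) {x : X}
    {α : Type*} {l : Filter α} {m : α → X × ℝ} (hm : Tendsto m l (𝓝 x ×ˢ 𝓝[>] 0)) (h : X) :
    IsBoundedUnder (· ≤ ·) l (diffQuot f h ∘ m) ∧ IsBoundedUnder (· ≥ ·) l (diffQuot f h ∘ m) := by
  obtain ⟨K, hK⟩ := hf.exists_eventually_abs_diffQuot_le x
  exact isBoundedUnder_le_abs.1 (isBoundedUnder_of_eventually_le (hm.eventually (hK h)))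

theorem LocallyLipschitz.exists_clarkeDeriv_le (hf : LocallyLipschitz f) (x : X) :
    ∃ K : ℝ, ∀ h, clarkeDeriv f x h ≤ K * ‖h‖ := by
  obtain ⟨K, hK⟩ := hf.exists_eventually_abs_diffQuot_le x
  refine ⟨K, fun h => limsup_le_of_le ?_ ((hK h).mono fun _ hp => (abs_le.1 hp).2)⟩
  exact (hf.isBoundedUnder_diffQuot_comp tendsto_id h).2.isCoboundedUnder_le

theorem LocallyLipschitz.clarkeDeriv_add_le (hf : LocallyLipschitz f) (x h k : X) :
    clarkeDeriv f x (h + k) ≤ clarkeDeriv f x h + clarkeDeriv f x k := by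
  set m : X × ℝ → X × ℝ := fun p => (p.1 + p.2 • k, p.2)
  have hm : Tendsto m (𝓝 x ×ˢ 𝓝[>] 0) (𝓝 x ×ˢ 𝓝[>] 0) := tendsto_translate_nhds_prod_nhdsGT x k
  obtain ⟨hm_le, hm_ge⟩ := hf.isBoundedUnder_diffQuot_comp hm h
  obtain ⟨hh_le, -⟩ := hf.isBoundedUnder_diffQuot_comp tendsto_id h
  obtain ⟨hk_le, hk_ge⟩ := hf.isBoundedUnder_diffQuot_comp tendsto_id k
  calc clarkeDeriv f x (h + k) = limsup (diffQuot f h ∘ m + diffQuot f k) (𝓝 x ×ˢ 𝓝[>] 0) := by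
        rw [clarkeDeriv_eq_limsup_diffQuot]
        congr 1
        ext p
        exact diffQuot_add f h k p
    _ ≤ limsup (diffQuot f h ∘ m) (𝓝 x ×ˢ 𝓝[>] 0) + clarkeDeriv f x k :=
        limsup_add_le hm_ge hm_le hk_ge.isCoboundedUnder_le hk_le
    _ ≤ clarkeDeriv f x h + clarkeDeriv f x k :=
        add_le_add_left (hm.limsup_comp_le_limsup hm_ge.isCoboundedUnder_le hh_le) _

theorem LocallyLipschitz.clarkeDeriv_smul (hf : LocallyLipschitz f) (x : X) {c : ℝ} (hc : 0 < c)
    (h : X) : clarkeDeriv f x (c • h) = c * clarkeDeriv f x h := by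
  set m : X × ℝ → X × ℝ := fun p => (p.1, c * p.2)
  have hmap : map m (𝓝 x ×ˢ 𝓝[>] 0) = 𝓝 x ×ˢ 𝓝[>] 0 := map_rescale_prod_nhdsGT _ hc
  obtain ⟨hm_le, hm_ge⟩ := hf.isBoundedUnder_diffQuot_comp hmap.le h
  calc clarkeDeriv f x (c • h) = limsup ((c * ·) ∘ (diffQuot f h ∘ m)) (𝓝 x ×ˢ 𝓝[>] 0) := by
        rw [clarkeDeriv_eq_limsup_diffQuot]
        congr 1
        ext p
        exact diffQuot_smul f hc.ne' h p
    _ = c * limsup (diffQuot f h ∘ m) (𝓝 x ×ˢ 𝓝[>] 0) :=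
        ((monotone_mul_left_of_nonneg hc.le).map_limsup_of_continuousAt _
          (continuous_const_mul c).continuousAt hm_le hm_ge.isCoboundedUnder_le).symm
    _ = c * clarkeDeriv f x h := by rw [limsup_comp, hmap, clarkeDeriv_eq_limsup_diffQuot]

theorem LocallyLipschitz.upperSemicontinuous_clarkeDeriv (hf : LocallyLipschitz f) (h : X) :
    UpperSemicontinuous (clarkeDeriv f · h) := by
  intro x u hxu
  obtain ⟨v, hxv, hvu⟩ := exists_between hxu
  have hev : ∀ᶠ p in 𝓝 x ×ˢ 𝓝[>] 0, diffQuot f h p < v :=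
    eventually_lt_of_limsup_lt hxv (hf.isBoundedUnder_diffQuot_comp tendsto_id h).1
  obtain ⟨s, hs, t, ht, hst⟩ := mem_prod_iff.1 hev
  filter_upwards [eventually_mem_nhds_iff.2 hs] with y hy
  refine lt_of_le_of_lt (limsup_le_of_le ?_ ?_) hvu
  · exact (hf.isBoundedUnder_diffQuot_comp tendsto_id h).2.isCoboundedUnder_le
  · exact eventually_of_mem (prod_mem_prod hy ht) fun p hp => (hst hp).le

end LocallyLipschitz

theorem exists_linearMap_le_sublinear_apply_eq {E : Type*} [AddCommGroup E] [Module ℝ E]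
    (N : E → ℝ) (N_hom : ∀ c : ℝ, 0 < c → ∀ x, N (c • x) = c * N x)
    (N_add : ∀ x y, N (x + y) ≤ N x + N y) (x : E) :
    ∃ g : E →ₗ[ℝ] ℝ, (∀ y, g y ≤ N y) ∧ g x = N x := by
  have N_zero : N 0 = 0 := by
    have h2 := N_hom 2 two_pos 0
    rw [smul_zero] at h2
    linarith
  let g₀ : E →ₗ.[ℝ] ℝ := LinearPMap.mkSpanSingleton' x (N x) fun c hcx => by
    rcases eq_or_ne c 0 with rfl | hc
    · exact zero_smul ℝ _
    · rw [(smul_eq_zero.1 hcx).resolve_left hc, N_zero, smul_zero]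
  obtain ⟨g, hg_ext, hg_le⟩ := exists_extension_of_le_sublinear g₀ N N_hom N_add <| by
    rintro ⟨_, hy⟩
    obtain ⟨c, rfl⟩ := Submodule.mem_span_singleton.1 hy
    rw [LinearPMap.mkSpanSingleton'_apply]
    change c * N x ≤ N (c • x)
    have hsum : 0 ≤ N (c • x) + N ((-c) • x) := by
      simpa [N_zero] using N_add (c • x) ((-c) • x)
    rcases lt_trichotomy c 0 with hc | rfl | hc
    · linarith [N_hom (-c) (neg_pos.2 hc) x]
    · simp [N_zero]
    · exact (N_hom c hc x).ge
  exact ⟨g, hg_le, (hg_ext ⟨x, Submodule.mem_span_singleton_self x⟩).trans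
    (LinearPMap.mkSpanSingleton'_apply_self _ _ _ _)⟩

theorem exists_strongDual_le_sublinear_apply_eq {E : Type*} [SeminormedAddCommGroup E]
    [NormedSpace ℝ E] (N : E → ℝ) (N_hom : ∀ c : ℝ, 0 < c → ∀ x, N (c • x) = c * N x)
    (N_add : ∀ x y, N (x + y) ≤ N x + N y) {K : ℝ} (N_le : ∀ x, N x ≤ K * ‖x‖) (x : E) :
    ∃ g : StrongDual ℝ E, (∀ y, g y ≤ N y) ∧ g x = N x := by
  obtain ⟨g, hg_le, hgx⟩ := exists_linearMap_le_sublinear_apply_eq N N_hom N_add x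
  refine ⟨g.mkContinuous K fun y => ?_, hg_le, hgx⟩
  rw [Real.norm_eq_abs, abs_le]
  constructor
  · have hneg := (hg_le (-y)).trans (N_le (-y))
    rw [map_neg, norm_neg] at hneg
    linarith
  · exact (hg_le y).trans (N_le y)

theorem LocallyLipschitz.exists_mem_clarkeGrad_apply_eq {f : X → ℝ} (hf : LocallyLipschitz f)
    (x h : X) : ∃ b ∈ clarkeGrad f x, b h = clarkeDeriv f x h := by
  obtain ⟨K, hK⟩ := hf.exists_clarkeDeriv_le x
  exact exists_strongDual_le_sublinear_apply_eq (clarkeDeriv f x)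
    (fun _ hc => hf.clarkeDeriv_smul x hc) (hf.clarkeDeriv_add_le x) hK h

theorem mem_setGrad_iff {f : X → ℝ} {A : Set X} {a : StrongDual ℝ X} :
    a ∈ setGrad f A ↔ StrongDual.toWeakDual a ∈
      closedConvexHull ℝ (StrongDual.toWeakDual '' ⋃ y ∈ A, clarkeGrad f y) := by
  have himage := (StrongDual.toWeakDual (𝕜 := ℝ) (E := X)).toLinearMap.image_convexHull
    (⋃ y ∈ A, clarkeGrad f y)
  rw [LinearEquiv.coe_coe] at himage
  rw [closedConvexHull_eq_closure_convexHull, ← himage]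
  rfl

theorem apply_le_of_mem_setGrad {f : X → ℝ} {A : Set X} {h : X} {u : ℝ}
    (hA : ∀ y ∈ A, clarkeDeriv f y h ≤ u) {a : StrongDual ℝ X} (ha : a ∈ setGrad f A) :
    a h ≤ u := by
  rw [mem_setGrad_iff] at ha
  let evalAt : StrongDual ℝ (WeakDual ℝ X) := WeakBilin.eval (topDualPairing ℝ X) h
  refine closedConvexHull_min ?_ (convex_halfSpace_le evalAt.toLinearMap.isLinear u)
    (isClosed_le evalAt.continuous continuous_const) ha
  rintro _ ⟨b, hb, rfl⟩
  obtain ⟨y, hy, hby⟩ := mem_iUnion₂.1 hb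
  exact (hby h).trans (hA y hy)

instance WeakDual.instLocallyConvexSpace : LocallyConvexSpace ℝ (WeakDual ℝ X) :=
  WeakBilin.locallyConvexSpace

theorem weakStar_limit_mem_setGrad_general
    (f : X → ℝ) (hf : LocallyLipschitz f)
    (A : ℕ → Set X) (A₀ : Set X)
    (hcomp : IsCompact A₀)
    (hconv : ∀ ε : ℝ, 0 < ε → ∀ᶠ k in atTop,
      A₀ ⊆ Metric.thickening ε (A k) ∧ A k ⊆ Metric.thickening ε A₀)
    (a : ℕ → StrongDual ℝ X) (ha : ∀ k, a k ∈ setGrad f (A k)) (a₀ : StrongDual ℝ X)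
    (hlim : Tendsto (fun k => StrongDual.toWeakDual (a k)) atTop (nhds (StrongDual.toWeakDual a₀))) :
    a₀ ∈ setGrad f A₀ := by
  by_contra hnot
  rw [mem_setGrad_iff] at hnot
  obtain ⟨g, u, hgu, hua⟩ :=
    geometric_hahn_banach_closed_point convex_closedConvexHull isClosed_closedConvexHull hnot
  obtain ⟨h, rfl⟩ := LinearMap.dualEmbedding_surjective (topDualPairing ℝ X) g
  have hlt_on_A₀ : A₀ ⊆ {y | clarkeDeriv f y h < u} := fun y hy => by
    obtain ⟨b, hb, hbh⟩ := hf.exists_mem_clarkeGrad_apply_eq y h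
    change clarkeDeriv f y h < u
    rw [← hbh]
    exact hgu _ (subset_closedConvexHull ⟨b, mem_iUnion₂.2 ⟨y, hy, hb⟩, rfl⟩)
  obtain ⟨ρ, hρ, hρA₀⟩ := hcomp.exists_thickening_subset_open
    ((hf.upperSemicontinuous_clarkeDeriv h).isOpen_preimage u) hlt_on_A₀
  have hle : ∀ᶠ k in atTop, a k h ≤ u := (hconv ρ hρ).mono fun k hk =>
    apply_le_of_mem_setGrad (fun y hy => (hρA₀ (hk.2 hy)).le) (ha k)
  have hlim_h : Tendsto (fun k => a k h) atTop (𝓝 (a₀ h)) :=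
    ((WeakBilin.eval (topDualPairing ℝ X) h).continuous.tendsto _).comp hlim
  exact (le_of_tendsto hlim_h hle).not_gt (show u < a₀ h from hua)

/-- Proposition 2.2 (upper semicontinuity), inclusion (6):
weak* limits of `a_k ∈ ∂f(A_k)` belong to `∂f(A)`. -/
theorem weakStar_limit_mem_setGrad
    [CompleteSpace X] (f : X → ℝ) (hf : LocallyLipschitz f)
    (A : ℕ → Set X) (A₀ : Set X) (hne : ∀ k, (A k).Nonempty) (hA₀ : A₀.Nonempty)
    (hcomp : IsCompact A₀)
    (hconv : ∀ ε : ℝ, 0 < ε → ∀ᶠ k in atTop,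
      A₀ ⊆ Metric.thickening ε (A k) ∧ A k ⊆ Metric.thickening ε A₀)
    (a : ℕ → StrongDual ℝ X) (ha : ∀ k, a k ∈ setGrad f (A k)) (a₀ : StrongDual ℝ X)
    (hlim : Tendsto (fun k => StrongDual.toWeakDual (a k)) atTop (nhds (StrongDual.toWeakDual a₀))) :
    a₀ ∈ setGrad f A₀ :=
  weakStar_limit_mem_setGrad_general f hf A A₀ hcomp hconv a ha a₀ hlim
end

section
/- Let f : X → ℝ be locally Lipschitz continuous and let A ⊂ X be a nonempty compact set such that 0 ∉ ∂f(x) for all x ∈ A. Then there exist ε > 0 and σ > 0 such that min{‖a‖ : a ∈ ∂f(B̄_ε(x))} ≥ σ for all x ∈ A (the minimum being attained). -/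
open Filter Metric Set NormedSpace
open scoped NNReal Topology
set_option linter.unusedSectionVars false
set_option linter.unusedVariables false

variable {X : Type*} [NormedAddCommGroup X] [NormedSpace ℝ X]

namespace ClarkeAux

section Gen
variable {α β : Type*} {F : Filter α} [F.NeBot] {u : α → ℝ} {C : ℝ}

lemma bdd_le_of_abs (hb : ∀ᶠ p in F, |u p| ≤ C) : IsBoundedUnder (· ≤ ·) F u :=
  isBoundedUnder_of_eventually_le (hb.mono fun p hp => (abs_le.1 hp).2)

lemma bdd_ge_of_abs (hb : ∀ᶠ p in F, |u p| ≤ C) : IsBoundedUnder (· ≥ ·) F u :=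
  isBoundedUnder_of_eventually_ge (hb.mono fun p hp => (abs_le.1 hp).1)

lemma cobdd_le_of_abs (hb : ∀ᶠ p in F, |u p| ≤ C) : IsCoboundedUnder (· ≤ ·) F u :=
  (bdd_ge_of_abs hb).isCoboundedUnder_le

lemma cobdd_ge_of_abs (hb : ∀ᶠ p in F, |u p| ≤ C) : IsCoboundedUnder (· ≥ ·) F u :=
  (bdd_le_of_abs hb).isCoboundedUnder_ge

lemma limsup_map_eq (u : β → ℝ) (φ : α → β) (G : Filter α) :
    limsup u (Filter.map φ G) = limsup (u ∘ φ) G := by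
  rw [Filter.limsup, Filter.limsup, Filter.map_map]
end Gen

noncomputable def cq (f : X → ℝ) (h : X) (p : X × ℝ) : ℝ :=
  (f (p.1 + p.2 • h) - f p.1) / p.2

noncomputable def cF (x : X) : Filter (X × ℝ) := (𝓝 x) ×ˢ (𝓝[>] (0:ℝ))

lemma clarkeDeriv_eq (f : X → ℝ) (x h : X) :
    clarkeDeriv f x h = Filter.limsup (cq f h) (cF x) := rfl

instance (x : X) : (cF x).NeBot := by
  have : (𝓝[>] (0:ℝ)).NeBot := nhdsGT_neBot 0
  unfold cF; infer_instance

lemma tendsto_shift (x : X) (h : X) :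
    Tendsto (fun p : X × ℝ => p.1 + p.2 • h) (cF x) (𝓝 x) := by
  have h1 : Tendsto (Prod.fst : X × ℝ → X) (cF x) (𝓝 x) := tendsto_fst
  have h2 : Tendsto (Prod.snd : X × ℝ → ℝ) (cF x) (𝓝 (0:ℝ)) :=
    tendsto_snd.mono_right nhdsWithin_le_nhds
  have := h1.add (h2.smul_const h)
  simpa using this

lemma tendsto_snd_pos (x : X) : ∀ᶠ p : X × ℝ in cF x, 0 < p.2 :=
  tendsto_snd.eventually_mem (self_mem_nhdsWithin)

lemma cq_bound {f : X → ℝ} (hf : LocallyLipschitz f) (x : X) :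
    ∃ K : ℝ≥0, ∀ h : X, ∀ᶠ p in cF x, |cq f h p| ≤ K * ‖h‖ := by
  obtain ⟨K, s, hs, hK⟩ := hf x
  refine ⟨K, fun h => ?_⟩
  filter_upwards [tendsto_fst.eventually_mem hs, (tendsto_shift x h).eventually_mem hs,
    tendsto_snd_pos x] with p h1 h2 h3
  have hd : dist (f (p.1 + p.2 • h)) (f p.1) ≤ K * dist (p.1 + p.2 • h) p.1 :=
    hK.dist_le_mul _ h2 _ h1
  rw [Real.dist_eq, dist_eq_norm] at hd
  have hn : ‖p.1 + p.2 • h - p.1‖ = p.2 * ‖h‖ := by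
    rw [add_sub_cancel_left, norm_smul, Real.norm_eq_abs, abs_of_pos h3]
  rw [hn] at hd
  rw [cq, abs_div, abs_of_pos h3, div_le_iff₀ h3]
  calc |f (p.1 + p.2 • h) - f p.1| ≤ K * (p.2 * ‖h‖) := hd
    _ = ↑K * ‖h‖ * p.2 := by ring

lemma clarkeDeriv_zero (f : X → ℝ) (x : X) : clarkeDeriv f x 0 = 0 := by
  rw [clarkeDeriv_eq]
  have : cq f (0 : X) = fun _ => (0:ℝ) := by
    funext p; simp [cq]
  rw [this, limsup_const]

lemma clarkeDeriv_le_bound {f : X → ℝ} (hf : LocallyLipschitz f) (x : X) :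
    ∃ K : ℝ≥0, ∀ h : X, clarkeDeriv f x h ≤ K * ‖h‖ := by
  obtain ⟨K, hK⟩ := cq_bound hf x
  refine ⟨K, fun h => ?_⟩
  rw [clarkeDeriv_eq]
  exact limsup_le_of_le (cobdd_le_of_abs (hK h))
    ((hK h).mono fun p hp => (abs_le.1 hp).2)

lemma clarkeDeriv_add_le {f : X → ℝ} (hf : LocallyLipschitz f) (x h₁ h₂ : X) :
    clarkeDeriv f x (h₁ + h₂) ≤ clarkeDeriv f x h₁ + clarkeDeriv f x h₂ := by
  obtain ⟨K, hK⟩ := cq_bound hf x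
  set φ : X × ℝ → X × ℝ := fun p => (p.1 + p.2 • h₂, p.2) with hφdef
  have hφ : Tendsto φ (cF x) (cF x) := (tendsto_shift x h₂).prodMk tendsto_snd
  set u : X × ℝ → ℝ := fun p => cq f h₁ (φ p) with hu
  have hbu : ∀ᶠ p in cF x, |u p| ≤ K * ‖h₁‖ := hφ.eventually (hK h₁)
  have hsplit : cq f (h₁ + h₂) = u + cq f h₂ := by
    funext p
    simp only [cq, hu, hφdef, Pi.add_apply]
    have harg : p.1 + p.2 • (h₁ + h₂) = p.1 + p.2 • h₂ + p.2 • h₁ := by module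
    rw [harg]; ring
  rw [clarkeDeriv_eq, hsplit]
  have h1 := limsup_add_le (f := cF x) (u := u) (v := cq f h₂)
    (bdd_ge_of_abs hbu) (bdd_le_of_abs hbu) (cobdd_le_of_abs (hK h₂)) (bdd_le_of_abs (hK h₂))
  refine h1.trans (add_le_add ?_ le_rfl)
  -- limsup u ≤ clarkeDeriv f x h₁
  have hmap : Filter.map φ (cF x) ≤ cF x := hφ
  haveI : (Filter.map φ (cF x)).NeBot := Filter.NeBot.map inferInstance φ
  have hco : IsCoboundedUnder (· ≤ ·) (Filter.map φ (cF x)) (cq f h₁) := by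
    apply Filter.IsBoundedUnder.isCoboundedUnder_le
    refine isBoundedUnder_of_eventually_ge (a := -(K * ‖h₁‖)) ?_
    rw [Filter.eventually_map]
    exact hbu.mono fun p hp => (abs_le.1 hp).1
  have := limsup_le_limsup_of_le hmap hco (bdd_le_of_abs (hK h₁))
  rwa [limsup_map_eq] at this


lemma clarkeDeriv_smul_le {f : X → ℝ} (hf : LocallyLipschitz f) (x : X) {c : ℝ} (hc : 0 < c)
    (h : X) : clarkeDeriv f x (c • h) ≤ c * clarkeDeriv f x h := by
  obtain ⟨K, hK⟩ := cq_bound hf x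
  set ψ : X × ℝ → X × ℝ := fun p => (p.1, c * p.2) with hψdef
  have hψsnd : Tendsto (fun p : X × ℝ => c * p.2) (cF x) (𝓝[>] (0:ℝ)) := by
    have h2 : Tendsto (Prod.snd : X × ℝ → ℝ) (cF x) (𝓝[>] (0:ℝ)) := tendsto_snd
    apply tendsto_nhdsWithin_of_tendsto_nhds_of_eventually_within
    · have := (h2.mono_right nhdsWithin_le_nhds).const_mul c
      simpa using this
    · exact (tendsto_snd_pos x).mono fun p hp => mul_pos hc hp
  have hψ : Tendsto ψ (cF x) (cF x) := tendsto_fst.prodMk hψsnd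
  set u : X × ℝ → ℝ := fun p => cq f h (ψ p) with hu
  have hbu : ∀ᶠ p in cF x, |u p| ≤ K * ‖h‖ := hψ.eventually (hK h)
  have hsplit : cq f (c • h) = fun p => c * u p := by
    funext p
    simp only [cq, hu, hψdef]
    have harg : p.1 + p.2 • (c • h) = p.1 + (c * p.2) • h := by module
    rw [harg, mul_div_assoc']
    rw [mul_div_mul_left _ _ hc.ne']
  rw [clarkeDeriv_eq, hsplit]
  have hbcu : ∀ᶠ p in cF x, |c * u p| ≤ c * (K * ‖h‖) := by
    refine hbu.mono fun p hp => ?_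
    rw [abs_mul, abs_of_pos hc]
    exact mul_le_mul_of_nonneg_left hp hc.le
  have hiso := (OrderIso.mulLeft₀ c hc).limsup_apply (f := cF x) (u := u)
    (bdd_le_of_abs hbu) (cobdd_le_of_abs hbu) (bdd_le_of_abs hbcu) (cobdd_le_of_abs hbcu)
  have hiso' : c * limsup u (cF x) = limsup (fun p => c * u p) (cF x) := hiso
  rw [← hiso']
  apply mul_le_mul_of_nonneg_left _ hc.le
  -- limsup u ≤ clarkeDeriv f x h
  have hmap : Filter.map ψ (cF x) ≤ cF x := hψ
  haveI : (Filter.map ψ (cF x)).NeBot := Filter.NeBot.map inferInstance ψ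
  have hco : IsCoboundedUnder (· ≤ ·) (Filter.map ψ (cF x)) (cq f h) := by
    apply Filter.IsBoundedUnder.isCoboundedUnder_le
    refine isBoundedUnder_of_eventually_ge (a := -(K * ‖h‖)) ?_
    rw [Filter.eventually_map]
    exact hbu.mono fun p hp => (abs_le.1 hp).1
  have := limsup_le_limsup_of_le hmap hco (bdd_le_of_abs (hK h))
  rwa [limsup_map_eq] at this

lemma clarkeDeriv_smul {f : X → ℝ} (hf : LocallyLipschitz f) (x : X) {c : ℝ} (hc : 0 < c)
    (h : X) : clarkeDeriv f x (c • h) = c * clarkeDeriv f x h := by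
  refine le_antisymm (clarkeDeriv_smul_le hf x hc h) ?_
  have h2 := clarkeDeriv_smul_le hf x (inv_pos.2 hc) (c • h)
  rw [smul_smul, inv_mul_cancel₀ hc.ne', one_smul] at h2
  have := mul_le_mul_of_nonneg_left h2 hc.le
  rwa [← mul_assoc, mul_inv_cancel₀ hc.ne', one_mul] at this

lemma clarkeDeriv_usc {f : X → ℝ} (hf : LocallyLipschitz f) (x : X) (h : X) {c : ℝ}
    (hlt : clarkeDeriv f x h < c) :
    ∃ δ > (0:ℝ), ∀ y ∈ ball x δ, clarkeDeriv f y h ≤ c := by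
  obtain ⟨K, hK⟩ := cq_bound hf x
  rw [clarkeDeriv_eq] at hlt
  have hev : ∀ᶠ p in cF x, cq f h p < c :=
    eventually_lt_of_limsup_lt hlt (bdd_le_of_abs (hK h))
  rw [cF, Filter.eventually_prod_iff] at hev
  obtain ⟨P, hP, Q, hQ, hPQ⟩ := hev
  have hPP : ∀ᶠ y in 𝓝 x, ∀ᶠ z in 𝓝 y, P z := hP.eventually_nhds
  rw [Metric.eventually_nhds_iff_ball] at hPP
  obtain ⟨δ, hδ, hball⟩ := hPP
  refine ⟨δ, hδ, fun y hy => ?_⟩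
  obtain ⟨K', hK'⟩ := cq_bound hf y
  rw [clarkeDeriv_eq]
  refine limsup_le_of_le (cobdd_le_of_abs (hK' h)) ?_
  have hPy : ∀ᶠ z in 𝓝 y, P z := hball y hy
  have : ∀ᶠ p : X × ℝ in cF y, P p.1 ∧ Q p.2 := hPy.prod_mk hQ
  exact this.mono fun p hp => (hPQ hp.1 hp.2).le


lemma clarkeGrad_nonempty {f : X → ℝ} (hf : LocallyLipschitz f) (x : X) :
    (clarkeGrad f x).Nonempty := by
  obtain ⟨K, hK⟩ := clarkeDeriv_le_bound hf x
  set N : X → ℝ := clarkeDeriv f x with hN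
  have hzero : N 0 = 0 := clarkeDeriv_zero f x
  obtain ⟨g, -, hg⟩ := exists_extension_of_le_sublinear ((0 : X →ₗ[ℝ] ℝ).toPMap ⊥) N
    (fun c hc y => clarkeDeriv_smul hf x hc y)
    (fun y z => clarkeDeriv_add_le hf x y z)
    (by
      rintro ⟨y, hy⟩
      have hy0 : y = 0 := by simpa using hy
      subst hy0
      simp [LinearMap.toPMap_apply, hzero])
  have hb : ∀ h : X, ‖g h‖ ≤ (K : ℝ) * ‖h‖ := by
    intro h
    rw [Real.norm_eq_abs, abs_le]
    constructor
    · have := (hg (-h)).trans (hK (-h))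
      rw [map_neg, norm_neg] at this
      linarith
    · exact (hg h).trans (hK h)
  refine ⟨LinearMap.mkContinuous g K hb, fun h => ?_⟩
  exact hg h

lemma setGrad_apply_le (f : X → ℝ) {B : Set X} {h : X} {c : ℝ}
    (hB : ∀ y ∈ B, clarkeDeriv f y h ≤ c) :
    ∀ a ∈ setGrad f B, a h ≤ c := by
  intro a ha
  have hconv : convexHull ℝ (⋃ y ∈ B, clarkeGrad f y) ⊆ {b : StrongDual ℝ X | b h ≤ c} := by
    apply convexHull_min
    · rintro b hb
      simp only [mem_iUnion] at hb
      obtain ⟨y, hy, hby⟩ := hb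
      exact (hby h).trans (hB y hy)
    · intro u hu v hv s t hs ht hst
      simp only [mem_setOf_eq] at hu hv ⊢
      have : (s • u + t • v) h = s * u h + t * v h := by
        simp [ContinuousLinearMap.add_apply, ContinuousLinearMap.smul_apply]
      rw [this]
      calc s * u h + t * v h ≤ s * c + t * c := by
            exact add_le_add (mul_le_mul_of_nonneg_left hu hs)
              (mul_le_mul_of_nonneg_left hv ht)
        _ = c := by rw [← add_mul, hst, one_mul]
  have hclosed : IsClosed {b : WeakDual ℝ X | b h ≤ c} :=
    IsClosed.preimage (WeakDual.eval_continuous h) isClosed_Iic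
  have hsub : closure ((StrongDual.toWeakDual (𝕜 := ℝ) (E := X)) ''
      (convexHull ℝ (⋃ y ∈ B, clarkeGrad f y))) ⊆ {b : WeakDual ℝ X | b h ≤ c} := by
    apply closure_minimal _ hclosed
    rintro b ⟨u, hu, rfl⟩
    exact hconv hu
  exact hsub ha

lemma exists_isLeast_norm_setGrad (f : X → ℝ) {B : Set X} (hne : (setGrad f B).Nonempty) :
    ∃ m : ℝ, IsLeast ((fun a : StrongDual ℝ X => ‖a‖) '' setGrad f B) m := by
  set S := setGrad f B with hS
  set NS := (fun a : StrongDual ℝ X => ‖a‖) '' S with hNS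
  have hNSne : NS.Nonempty := hne.image _
  have hbdd : BddBelow NS := ⟨0, by rintro r ⟨a, -, rfl⟩; exact norm_nonneg a⟩
  set m := sInf NS with hm
  set T := closure ((StrongDual.toWeakDual (𝕜 := ℝ) (E := X)) ''
    (convexHull ℝ (⋃ y ∈ B, clarkeGrad f y))) with hT
  have hTclosed : IsClosed T := isClosed_closure
  set C : ℕ → Set (WeakDual ℝ X) :=
    fun n => T ∩ (WeakDual.toStrongDual ⁻¹' Metric.closedBall 0 (m + 1/(n+1))) with hC
  have hCclosed : ∀ n, IsClosed (C n) := fun n =>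
    hTclosed.inter (WeakDual.isCompact_closedBall (𝕜 := ℝ) 0 (m + 1/(n+1))).isClosed
  have hCcompact : ∀ n, IsCompact (C n) := fun n =>
    (WeakDual.isCompact_closedBall (𝕜 := ℝ) 0 (m + 1/(n+1))).inter_left hTclosed
  have hCne : ∀ n, (C n).Nonempty := by
    intro n
    have hlt : m < m + 1/(n+1) := by
      have : (0:ℝ) < 1/(n+1) := by positivity
      linarith
    obtain ⟨r, hrNS, hr⟩ := exists_lt_of_csInf_lt hNSne hlt
    obtain ⟨a, haS, rfl⟩ := hrNS
    refine ⟨StrongDual.toWeakDual a, haS, ?_⟩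
    simp only [mem_preimage, Metric.mem_closedBall, dist_zero_right]
    exact le_of_lt hr
  have hCdec : ∀ n, C (n+1) ⊆ C n := by
    intro n
    apply inter_subset_inter_right
    apply preimage_mono
    apply Metric.closedBall_subset_closedBall
    have h1 : (1:ℝ)/(n+1+1) ≤ 1/(n+1) := by
      apply one_div_le_one_div_of_le
      · positivity
      · linarith
    push_cast
    linarith
  obtain ⟨b, hb⟩ := IsCompact.nonempty_iInter_of_sequence_nonempty_isCompact_isClosed
    C hCdec hCne (hCcompact 0) hCclosed
  simp only [mem_iInter] at hb
  set a : StrongDual ℝ X := WeakDual.toStrongDual b with ha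
  have haS : a ∈ S := (hb 0).1
  have hnorm_le : ‖a‖ ≤ m := by
    refine le_of_forall_pos_le_add fun ε hε => ?_
    obtain ⟨n, hn⟩ := exists_nat_one_div_lt hε
    have := (hb n).2
    simp only [mem_preimage, Metric.mem_closedBall, dist_zero_right] at this
    calc ‖a‖ ≤ m + 1/(n+1) := this
      _ ≤ m + ε := by linarith [hn.le]
  have hmem : m ∈ NS := by
    have : m ≤ ‖a‖ := csInf_le hbdd ⟨a, haS, rfl⟩
    have heq : ‖a‖ = m := le_antisymm hnorm_le this
    exact ⟨a, haS, heq⟩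
  exact ⟨m, hmem, fun r hr => csInf_le hbdd hr⟩

end ClarkeAux

/-- Proposition 2.5: if `0 ∉ ∂f(x)` for all `x` in a compact set `A`, then there are
`ε, σ > 0` with `min{‖a‖ : a ∈ ∂f(B̄_ε(x))} ≥ σ` for all `x ∈ A`. -/
theorem exists_eps_sigma_norm_setGrad_closedBall_ge
    [CompleteSpace X] (f : X → ℝ) (hf : LocallyLipschitz f)
    (A : Set X) (hA : A.Nonempty) (hcomp : IsCompact A)
    (h0 : ∀ x ∈ A, (0 : StrongDual ℝ X) ∉ clarkeGrad f x) :
    ∃ ε > (0 : ℝ), ∃ σ > (0 : ℝ), ∀ x ∈ A,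
      ∃ m : ℝ, IsLeast ((fun a : StrongDual ℝ X => ‖a‖) '' setGrad f (Metric.closedBall x ε)) m ∧
        σ ≤ m := by
  classical
  have key : ∀ x ∈ A, ∃ (h : X) (c δ : ℝ), 0 < c ∧ 0 < δ ∧ h ≠ 0 ∧
      ∀ y ∈ ball x δ, clarkeDeriv f y h ≤ -c := by
    intro x hx
    have hx0 := h0 x hx
    simp only [clarkeGrad, mem_setOf_eq, not_forall, ContinuousLinearMap.zero_apply,
      not_le] at hx0
    obtain ⟨h, hh⟩ := hx0
    have hne : h ≠ 0 := by
      rintro rfl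
      rw [ClarkeAux.clarkeDeriv_zero] at hh
      exact lt_irrefl 0 hh
    have hcpos : 0 < -clarkeDeriv f x h / 2 := by linarith
    have hlt : clarkeDeriv f x h < -(-clarkeDeriv f x h / 2) := by linarith
    obtain ⟨δ, hδ, hball⟩ := ClarkeAux.clarkeDeriv_usc hf x h hlt
    exact ⟨h, -clarkeDeriv f x h / 2, δ, hcpos, hδ, hne, hball⟩
  choose! H C D hCpos hDpos hHne hbound using key
  obtain ⟨t, htA, hcover⟩ := hcomp.elim_nhds_subcover (fun x => ball x (D x / 2))
    (fun x hx => ball_mem_nhds x (by linarith [hDpos x hx]))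
  have htne : t.Nonempty := by
    obtain ⟨x, hx⟩ := hA
    obtain ⟨i, hi, -⟩ := mem_iUnion₂.1 (hcover hx)
    exact ⟨i, hi⟩
  set ε := t.inf' htne (fun i => D i / 2) with hε
  have hεpos : 0 < ε := by
    rw [hε, Finset.lt_inf'_iff]
    intro i hi
    linarith [hDpos i (htA i hi)]
  set σ := t.inf' htne (fun i => C i / ‖H i‖) with hσ
  have hσpos : 0 < σ := by
    rw [hσ, Finset.lt_inf'_iff]
    intro i hi
    have h1 := hCpos i (htA i hi)
    have h2 : 0 < ‖H i‖ := norm_pos_iff.2 (hHne i (htA i hi))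
    positivity
  refine ⟨ε, hεpos, σ, hσpos, fun x hx => ?_⟩
  obtain ⟨i, hit, hxi⟩ := mem_iUnion₂.1 (hcover hx)
  have hiA : i ∈ A := htA i hit
  have hsub : Metric.closedBall x ε ⊆ ball i (D i) := by
    intro y hy
    have h1 : dist y x ≤ ε := Metric.mem_closedBall.1 hy
    have h2 : dist x i < D i / 2 := Metric.mem_ball.1 hxi
    have h3 : ε ≤ D i / 2 := Finset.inf'_le _ hit
    have : dist y i < D i := by
      calc dist y i ≤ dist y x + dist x i := dist_triangle y x i
        _ < D i := by linarith
    exact Metric.mem_ball.2 this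
  have hballbd : ∀ y ∈ Metric.closedBall x ε, clarkeDeriv f y (H i) ≤ -(C i) :=
    fun y hy => hbound i hiA y (hsub hy)
  have hSbd : ∀ a ∈ setGrad f (Metric.closedBall x ε), a (H i) ≤ -(C i) :=
    ClarkeAux.setGrad_apply_le f hballbd
  have hnormbd : ∀ a ∈ setGrad f (Metric.closedBall x ε), σ ≤ ‖a‖ := by
    intro a ha
    have h1 := hSbd a ha
    have h2 : |a (H i)| ≤ ‖a‖ * ‖H i‖ := by
      have := a.le_opNorm (H i)
      rwa [Real.norm_eq_abs] at this
    have h3 : 0 < ‖H i‖ := norm_pos_iff.2 (hHne i hiA)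
    have h4 : C i ≤ ‖a‖ * ‖H i‖ := by
      have hca : C i ≤ |a (H i)| := le_trans (by linarith) (neg_le_abs _)
      linarith
    have h5 : C i / ‖H i‖ ≤ ‖a‖ := (div_le_iff₀ h3).2 (by linarith)
    exact le_trans (Finset.inf'_le _ hit) h5
  have hSne : (setGrad f (Metric.closedBall x ε)).Nonempty := by
    obtain ⟨a₀, ha₀⟩ := ClarkeAux.clarkeGrad_nonempty hf x
    refine ⟨a₀, ?_⟩
    simp only [setGrad, mem_setOf_eq]
    apply subset_closure
    exact mem_image_of_mem _ (subset_convexHull ℝ _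
      (mem_iUnion₂.2 ⟨x, Metric.mem_closedBall_self hεpos.le, ha₀⟩))
  obtain ⟨m, hm⟩ := ClarkeAux.exists_isLeast_norm_setGrad f hSne
  have hm1 := hm.1
  refine ⟨m, hm, ?_⟩
  obtain ⟨a, haS, heq⟩ := hm1
  rw [← heq]
  exact hnormbd a haS
end
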